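/- arXiv:1509.06287 — 4 statements merged into one kernel-verified Lean document; each statement's English description precedes it below -/
import Mathlib

section
/- Let E ⊆ ℝⁿ × ℝ be a bounded parabolic neighborhood and let u, v be bounded functions on E. Then the set Θ = { τ ∈ ℝ : u^{*,E} < v_{*,E} on cl(E) ∩ cl{(x,t) ∈ E : u(x,t) > 0} ∩ {t ≤ τ} } is open and equal to an interval of the form (−∞, T) for some T ∈ (−∞, ∞]. -/
open Set Filter Topology

/-- A parabolic neighborhood in `ℝⁿ × ℝ`: a set of the form `U ∩ {t ≤ τ₀}` with `U` open. -/
def IsParabolicNbhd {n : ℕ} (E : Set (EuclideanSpace ℝ (Fin n) × ℝ)) : Prop :=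
  ∃ (U : Set (EuclideanSpace ℝ (Fin n) × ℝ)) (τ₀ : ℝ),
    IsOpen U ∧ E = U ∩ {p | p.2 ≤ τ₀}

/-- Upper semicontinuous envelope of `u` relative to `E`. -/
noncomputable def uStarRel {n : ℕ} (E : Set (EuclideanSpace ℝ (Fin n) × ℝ))
    (u : EuclideanSpace ℝ (Fin n) × ℝ → ℝ) (p : EuclideanSpace ℝ (Fin n) × ℝ) : ℝ :=
  sInf {c : ℝ | ∃ v : EuclideanSpace ℝ (Fin n) × ℝ → ℝ,
    UpperSemicontinuous v ∧ (∀ q ∈ E, u q ≤ v q) ∧ v p = c}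

/-- Lower semicontinuous envelope of `v` relative to `E`. -/
noncomputable def uLowerRel {n : ℕ} (E : Set (EuclideanSpace ℝ (Fin n) × ℝ))
    (u : EuclideanSpace ℝ (Fin n) × ℝ → ℝ) (p : EuclideanSpace ℝ (Fin n) × ℝ) : ℝ :=
  sSup {c : ℝ | ∃ v : EuclideanSpace ℝ (Fin n) × ℝ → ℝ,
    LowerSemicontinuous v ∧ (∀ q ∈ E, v q ≤ u q) ∧ v p = c}

lemma uStar_bddBelow {n : ℕ} {E : Set (EuclideanSpace ℝ (Fin n) × ℝ)}
    {u : EuclideanSpace ℝ (Fin n) × ℝ → ℝ} {C : ℝ} (hub : ∀ p ∈ E, |u p| ≤ C)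
    {p : EuclideanSpace ℝ (Fin n) × ℝ} (hp : p ∈ closure E) :
    BddBelow {c : ℝ | ∃ w : EuclideanSpace ℝ (Fin n) × ℝ → ℝ,
      UpperSemicontinuous w ∧ (∀ q ∈ E, u q ≤ w q) ∧ w p = c} := by
  refine ⟨-C, ?_⟩
  rintro c ⟨w, hw, hwu, rfl⟩
  by_contra h
  push_neg at h
  obtain ⟨q, hq1, hq2⟩ := mem_closure_iff_nhds.1 hp _ (hw p (-C) h)
  exact absurd ((abs_le.1 (hub q hq2)).1.trans (hwu q hq2)) (not_le.2 hq1)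

lemma uStar_setNonempty {n : ℕ} {E : Set (EuclideanSpace ℝ (Fin n) × ℝ)}
    {u : EuclideanSpace ℝ (Fin n) × ℝ → ℝ} {C : ℝ} (hub : ∀ p ∈ E, |u p| ≤ C)
    (p : EuclideanSpace ℝ (Fin n) × ℝ) :
    Set.Nonempty {c : ℝ | ∃ w : EuclideanSpace ℝ (Fin n) × ℝ → ℝ,
      UpperSemicontinuous w ∧ (∀ q ∈ E, u q ≤ w q) ∧ w p = c} :=
  ⟨C, fun _ => C, continuous_const.upperSemicontinuous,
    fun q hq => (abs_le.1 (hub q hq)).2, rfl⟩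

lemma uStar_lt_eventually {n : ℕ} {E : Set (EuclideanSpace ℝ (Fin n) × ℝ)}
    {u : EuclideanSpace ℝ (Fin n) × ℝ → ℝ} {C : ℝ} (hub : ∀ p ∈ E, |u p| ≤ C)
    {p : EuclideanSpace ℝ (Fin n) × ℝ} (hp : p ∈ closure E) {c : ℝ}
    (h : uStarRel E u p < c) :
    ∀ᶠ q in 𝓝 p, q ∈ closure E → uStarRel E u q < c := by
  obtain ⟨_, ⟨w, hw, hwu, rfl⟩, hwc⟩ :=
    (csInf_lt_iff (uStar_bddBelow hub hp) (uStar_setNonempty hub p)).1 h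
  filter_upwards [hw p c hwc] with q hq hqE
  exact lt_of_le_of_lt (csInf_le (uStar_bddBelow hub hqE) ⟨w, hw, hwu, rfl⟩) hq

lemma uLower_bddAbove {n : ℕ} {E : Set (EuclideanSpace ℝ (Fin n) × ℝ)}
    {v : EuclideanSpace ℝ (Fin n) × ℝ → ℝ} {C : ℝ} (hvb : ∀ p ∈ E, |v p| ≤ C)
    {p : EuclideanSpace ℝ (Fin n) × ℝ} (hp : p ∈ closure E) :
    BddAbove {c : ℝ | ∃ w : EuclideanSpace ℝ (Fin n) × ℝ → ℝ,
      LowerSemicontinuous w ∧ (∀ q ∈ E, w q ≤ v q) ∧ w p = c} := by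
  refine ⟨C, ?_⟩
  rintro c ⟨w, hw, hwv, rfl⟩
  by_contra h
  push_neg at h
  obtain ⟨q, hq1, hq2⟩ := mem_closure_iff_nhds.1 hp _ (hw p C h)
  exact absurd ((hwv q hq2).trans (abs_le.1 (hvb q hq2)).2) (not_le.2 hq1)

lemma uLower_setNonempty {n : ℕ} {E : Set (EuclideanSpace ℝ (Fin n) × ℝ)}
    {v : EuclideanSpace ℝ (Fin n) × ℝ → ℝ} {C : ℝ} (hvb : ∀ p ∈ E, |v p| ≤ C)
    (p : EuclideanSpace ℝ (Fin n) × ℝ) :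
    Set.Nonempty {c : ℝ | ∃ w : EuclideanSpace ℝ (Fin n) × ℝ → ℝ,
      LowerSemicontinuous w ∧ (∀ q ∈ E, w q ≤ v q) ∧ w p = c} :=
  ⟨-C, fun _ => -C, continuous_const.lowerSemicontinuous,
    fun q hq => (abs_le.1 (hvb q hq)).1, rfl⟩

lemma uLower_gt_eventually {n : ℕ} {E : Set (EuclideanSpace ℝ (Fin n) × ℝ)}
    {v : EuclideanSpace ℝ (Fin n) × ℝ → ℝ} {C : ℝ} (hvb : ∀ p ∈ E, |v p| ≤ C)
    {p : EuclideanSpace ℝ (Fin n) × ℝ} (hp : p ∈ closure E) {c : ℝ}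
    (h : c < uLowerRel E v p) :
    ∀ᶠ q in 𝓝 p, q ∈ closure E → c < uLowerRel E v q := by
  obtain ⟨_, ⟨w, hw, hwv, rfl⟩, hwc⟩ :=
    (lt_csSup_iff (uLower_bddAbove hvb hp) (uLower_setNonempty hvb p)).1 h
  filter_upwards [hw p c hwc] with q hq hqE
  exact lt_of_lt_of_le hq (le_csSup (uLower_bddAbove hvb hqE) ⟨w, hw, hwv, rfl⟩)

theorem stmt1 {n : ℕ} (E : Set (EuclideanSpace ℝ (Fin n) × ℝ))
    (hE : IsParabolicNbhd E) (hEne : E.Nonempty) (hEb : Bornology.IsBounded E)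
    (u v : EuclideanSpace ℝ (Fin n) × ℝ → ℝ)
    (hub : ∃ C, ∀ p ∈ E, |u p| ≤ C) (hvb : ∃ C, ∀ p ∈ E, |v p| ≤ C) :
    IsOpen {τ : ℝ | ∀ p ∈ closure E ∩ closure {q ∈ E | 0 < u q} ∩
        {q : EuclideanSpace ℝ (Fin n) × ℝ | q.2 ≤ τ}, uStarRel E u p < uLowerRel E v p} ∧
    ∃ T : EReal, ⊥ < T ∧
      {τ : ℝ | ∀ p ∈ closure E ∩ closure {q ∈ E | 0 < u q} ∩
        {q : EuclideanSpace ℝ (Fin n) × ℝ | q.2 ≤ τ}, uStarRel E u p < uLowerRel E v p}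
        = {τ : ℝ | (τ : EReal) < T} := by
  obtain ⟨C, hub⟩ := hub
  obtain ⟨C', hvb⟩ := hvb
  set Θ : Set ℝ := {τ : ℝ | ∀ p ∈ closure E ∩ closure {q ∈ E | 0 < u q} ∩
      {q : EuclideanSpace ℝ (Fin n) × ℝ | q.2 ≤ τ}, uStarRel E u p < uLowerRel E v p}
    with hΘ
  obtain ⟨R, hR⟩ := hEb.subset_closedBall 0
  have hclE : closure E ⊆ Metric.closedBall 0 R :=
    closure_minimal hR Metric.isClosed_closedBall
  have htb : ∀ p ∈ closure E, -R ≤ p.2 := by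
    intro p hp
    have h1 : dist p (0 : EuclideanSpace ℝ (Fin n) × ℝ) ≤ R := hclE hp
    have h2 : dist p.2 (0 : ℝ) ≤ dist p (0 : EuclideanSpace ℝ (Fin n) × ℝ) := by
      rw [Prod.dist_eq]; exact le_max_right _ _
    have : |p.2| ≤ R := by simpa [Real.dist_eq] using h2.trans h1
    linarith [(abs_le.1 this).1]
  set K : Set (EuclideanSpace ℝ (Fin n) × ℝ) :=
    closure E ∩ closure {q ∈ E | 0 < u q} with hK
  have hKsub : K ⊆ closure E := inter_subset_left
  have hKcomp : IsCompact K :=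
    (isCompact_closedBall (0 : EuclideanSpace ℝ (Fin n) × ℝ) R).of_isClosed_subset
      (isClosed_closure.inter isClosed_closure) (hKsub.trans hclE)
  -- downward closedness
  have hdown : ∀ τ' τ, τ' ≤ τ → τ ∈ Θ → τ' ∈ Θ := by
    intro τ' τ hle hτ p hp
    exact hτ p ⟨hp.1, le_trans hp.2 hle⟩
  -- openness step
  have hstep : ∀ τ ∈ Θ, ∃ ε > (0 : ℝ), τ + ε ∈ Θ := by
    intro τ hτ
    by_contra hcon
    push_neg at hcon
    have hk : ∀ k : ℕ, ∃ p, p ∈ K ∧ p.2 ≤ τ + 1 / (k + 1) ∧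
        ¬ uStarRel E u p < uLowerRel E v p := by
      intro k
      have h1 : τ + 1 / ((k : ℝ) + 1) ∉ Θ := hcon (1 / ((k : ℝ) + 1)) (by positivity)
      simp only [hΘ, mem_setOf_eq, not_forall] at h1
      obtain ⟨p, hp1, hp2⟩ := h1
      exact ⟨p, hp1.1, hp1.2, hp2⟩
    choose p hpK hpt hpf using hk
    obtain ⟨q, hqK, φ, hφ, hconv⟩ := hKcomp.tendsto_subseq hpK
    have hq2 : Tendsto (fun k => (p (φ k)).2) atTop (𝓝 q.2) :=
      (continuous_snd.continuousAt.tendsto).comp hconv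
    have hτlim : Tendsto (fun k => τ + 1 / ((φ k : ℝ) + 1)) atTop (𝓝 (τ + 0)) := by
      refine tendsto_const_nhds.add ?_
      exact tendsto_one_div_add_atTop_nhds_zero_nat.comp hφ.tendsto_atTop
    have hqt : q.2 ≤ τ := by
      have := le_of_tendsto_of_tendsto' hq2 hτlim (fun k => hpt (φ k))
      simpa using this
    have hfg : uStarRel E u q < uLowerRel E v q := hτ q ⟨hqK, hqt⟩
    set c : ℝ := (uStarRel E u q + uLowerRel E v q) / 2 with hc
    have hqE : q ∈ closure E := hKsub hqK
    have h1 : ∀ᶠ r in 𝓝 q, r ∈ closure E → uStarRel E u r < c :=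
      uStar_lt_eventually hub hqE (by simp only [hc]; linarith)
    have h2 : ∀ᶠ r in 𝓝 q, r ∈ closure E → c < uLowerRel E v r :=
      uLower_gt_eventually hvb hqE (by simp only [hc]; linarith)
    obtain ⟨k, hk1, hk2⟩ := ((hconv.eventually h1).and (hconv.eventually h2)).exists
    have hE' : (p (φ k)) ∈ closure E := hKsub (hpK (φ k))
    exact hpf (φ k) ((hk1 hE').trans (hk2 hE'))
  have hopen : IsOpen Θ := by
    rw [isOpen_iff_mem_nhds]
    intro τ hτ
    obtain ⟨ε, hε, hτε⟩ := hstep τ hτ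
    exact mem_of_superset (Iio_mem_nhds (by linarith : τ < τ + ε))
      (fun τ' hτ' => hdown τ' (τ + ε) (le_of_lt hτ') hτε)
  refine ⟨hopen, sSup (Real.toEReal '' Θ), ?_, ?_⟩
  · -- Θ nonempty
    have hmem : (-(R + 1)) ∈ Θ := by
      intro p hp
      exfalso
      have := htb p hp.1.1
      have := hp.2
      simp only [mem_setOf_eq] at this
      linarith
    calc (⊥ : EReal) < ((-(R + 1) : ℝ) : EReal) := EReal.bot_lt_coe _
      _ ≤ _ := le_sSup (mem_image_of_mem _ hmem)
  · ext τ
    simp only [mem_setOf_eq]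
    constructor
    · intro hτ
      obtain ⟨ε, hε, hτε⟩ := hstep τ hτ
      calc ((τ : ℝ) : EReal) < ((τ + ε : ℝ) : EReal) := by
            exact_mod_cast (by linarith : τ < τ + ε)
        _ ≤ _ := le_sSup (mem_image_of_mem _ hτε)
    · intro hτ
      obtain ⟨b, ⟨τ', hτ', rfl⟩, hlt⟩ := lt_sSup_iff.1 hτ
      exact hdown τ τ' (le_of_lt (by exact_mod_cast hlt)) hτ'
end

section
/- Let g : ℝⁿ × ℝ → (0, ∞] satisfy: (i) g is continuous at every point where g < ∞; (ii) g(x̂,t̂) = liminf_{(x,t)→(x̂,t̂)} g(x,t) for all points; (iii) g is nondecreasing in the time variable t; (iv) the set {g = ∞} is the epigraph in time of a function τ : ℝⁿ → ℝ ∪ {∞} that is continuous at every point where τ < ∞. Then for every compact set E ⊆ ℝⁿ × [0,∞), every α > 1 and every σ > 0 there exists r > 0 such that α·g(x, αt + σ) ≥ g(y, s) whenever (x,t), (y,s) ∈ E and |(x,t) − (y,s)| ≤ r. -/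
open Set Filter Topology ENNReal

/-! Near a point `(x₀, t₀)` with `τ x₀ < α t₀ + σ`, the shifted function `g (x, α t + σ)` is
identically `∞`, so there is nothing to prove. Otherwise pick `t₀ < s < α t₀ + σ` (possible as
`t₀ ≥ 0`); then `g (x₀, s)` is finite and positive, `g` is continuous there, and monotonicity in
time gives `g (y, s') ≤ g (y, s) ≈ g (x₀, s) < α g (x₀, s) ≈ α g (x, s) ≤ α g (x, α t + σ)` for
all points near `(x₀, t₀)`. These local estimates become uniform on the compact set `E` by the
Lebesgue number lemma. -/

theorem IsCompact.exists_dist_le_of_eventually_nhds_diag {X : Type*} [PseudoMetricSpace X]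
    {K : Set X} (hK : IsCompact K) {R : X → X → Prop}
    (hR : ∀ x ∈ K, ∀ᶠ y in 𝓝 (x, x), R y.1 y.2) :
    ∃ r > 0, ∀ p ∈ K, ∀ q, dist p q ≤ r → R p q := by
  have hball : ∀ x ∈ K, ∃ ρ > 0, ∀ p ∈ Metric.ball x ρ, ∀ q ∈ Metric.ball x ρ, R p q := by
    intro x hx
    obtain ⟨ρ, hρ, hsub⟩ := Metric.mem_nhds_iff.mp (hR x hx)
    rw [← ball_prod_same] at hsub
    exact ⟨ρ, hρ, fun p hp q hq => hsub (mk_mem_prod hp hq)⟩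
  choose ρ hρ hR using hball
  obtain ⟨δ, hδ, hδK⟩ := lebesgue_number_lemma_of_metric hK
    (c := fun x : K => Metric.ball (x : X) (ρ x x.2)) (fun _ => Metric.isOpen_ball)
    (fun x hx => mem_iUnion.mpr ⟨⟨x, hx⟩, Metric.mem_ball_self (hρ x hx)⟩)
  refine ⟨δ / 2, half_pos hδ, fun p hp q hpq => ?_⟩
  obtain ⟨x, hx⟩ := hδK p hp
  refine hR x x.2 p (hx (Metric.mem_ball_self hδ)) q (hx ?_)
  rw [Metric.mem_ball, dist_comm]
  linarith

section

variable {X : Type*} [TopologicalSpace X] {g : X × ℝ → ℝ≥0∞} {τ : X → EReal} {φ : ℝ → ℝ}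
  {x₀ : X} {t₀ : ℝ}

theorem eventually_comp_eq_top_of_lt (hepi : ∀ x t, g (x, t) = ⊤ ↔ τ x ≤ (t : EReal))
    (hτ : ContinuousAt τ x₀) (hφ : ContinuousAt φ t₀) (hlt : τ x₀ < (φ t₀ : EReal)) :
    ∀ᶠ p in 𝓝 (x₀, t₀), g (p.1, φ p.2) = ⊤ := by
  have hτφ : ∀ᶠ p in 𝓝 (x₀, t₀), τ p.1 < (φ p.2 : EReal) :=
    (hτ.comp continuousAt_fst).eventually_lt
      (continuous_coe_real_ereal.continuousAt.comp (hφ.comp continuousAt_snd)) hlt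
  exact hτφ.mono fun p hp => (hepi _ _).mpr hp.le

theorem eventually_le_mul_of_lt_top (hmono : ∀ x, Monotone fun t => g (x, t)) {s : ℝ}
    (hcont : ContinuousAt g (x₀, s)) (hpos : 0 < g (x₀, s)) (htop : g (x₀, s) < ⊤)
    (hs : t₀ < s) (hφ : ContinuousAt φ t₀) (hsφ : s < φ t₀) {c : ℝ≥0∞} (hc : 1 < c)
    (hc' : c ≠ ⊤) :
    ∀ᶠ pq in 𝓝 ((x₀, t₀), (x₀, t₀)), g pq.2 ≤ c * g (pq.1.1, φ pq.1.2) := by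
  have hq : ∀ᶠ q in 𝓝 (x₀, t₀), g q ≤ g (q.1, s) :=
    (continuousAt_snd.eventually (eventually_lt_nhds hs)).mono fun q hq => hmono q.1 hq.le
  have hp : ∀ᶠ p in 𝓝 (x₀, t₀), g (p.1, s) ≤ g (p.1, φ p.2) :=
    ((hφ.comp continuousAt_snd).eventually (eventually_gt_nhds hsφ)).mono
      fun p hp => hmono p.1 hp.le
  have hgs : ∀ᶠ pq in 𝓝 ((x₀, t₀), (x₀, t₀)), g (pq.2.1, s) < c * g (pq.1.1, s) := by
    have hleft : ContinuousAt (fun pq : (X × ℝ) × (X × ℝ) => g (pq.2.1, s)) ((x₀, t₀), (x₀, t₀)) :=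
      ContinuousAt.comp (g := g) (f := fun pq : (X × ℝ) × (X × ℝ) => (pq.2.1, s)) hcont
        (by fun_prop)
    have hright : ContinuousAt (fun pq : (X × ℝ) × (X × ℝ) => g (pq.1.1, s)) ((x₀, t₀), (x₀, t₀)) :=
      ContinuousAt.comp (g := g) (f := fun pq : (X × ℝ) × (X × ℝ) => (pq.1.1, s)) hcont
        (by fun_prop)
    refine hleft.eventually_lt (ENNReal.Tendsto.const_mul hright (Or.inr hc')) ?_
    simpa using ENNReal.mul_lt_mul_left hpos.ne' htop.ne hc
  filter_upwards [hgs, continuousAt_snd.eventually hq, continuousAt_fst.eventually hp]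
    with pq hlt hq hp
  exact hq.trans (hlt.le.trans (mul_le_mul_right hp c))

theorem eventually_le_mul_nhds_diag (hgpos : ∀ p, 0 < g p)
    (hgcont : ∀ p, g p < ⊤ → ContinuousAt g p) (hmono : ∀ x, Monotone fun t => g (x, t))
    (hepi : ∀ x t, g (x, t) = ⊤ ↔ τ x ≤ (t : EReal)) (hτcont : ∀ x, τ x < ⊤ → ContinuousAt τ x)
    (hφ : ContinuousAt φ t₀) (hφt₀ : t₀ < φ t₀) {c : ℝ≥0∞} (hc : 1 < c) (hc' : c ≠ ⊤) :
    ∀ᶠ pq in 𝓝 ((x₀, t₀), (x₀, t₀)), g pq.2 ≤ c * g (pq.1.1, φ pq.1.2) := by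
  rcases lt_or_ge (τ x₀) (φ t₀ : EReal) with hlt | hge
  · have htop := eventually_comp_eq_top_of_lt hepi (hτcont x₀ (hlt.trans_le le_top)) hφ hlt
    filter_upwards [continuousAt_fst.eventually htop] with pq hpq
    rw [hpq, ENNReal.mul_top (zero_lt_one.trans hc).ne']
    exact le_top
  · obtain ⟨s, hs, hsφ⟩ := exists_between hφt₀
    have hgs : g (x₀, s) < ⊤ := by
      rw [lt_top_iff_ne_top, Ne, hepi, not_le]
      exact (EReal.coe_lt_coe_iff.mpr hsφ).trans_le hge
    exact eventually_le_mul_of_lt_top hmono (hgcont _ hgs) (hgpos _) hgs hs hφ hsφ hc hc'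

end

theorem stmt3_general {n : ℕ}
    (g : EuclideanSpace ℝ (Fin n) × ℝ → ℝ≥0∞)
    (hgpos : ∀ p, 0 < g p)
    (hgcont : ∀ p, g p < ⊤ → ContinuousAt g p)
    (hmono : ∀ x : EuclideanSpace ℝ (Fin n), Monotone (fun t => g (x, t)))
    (τ : EuclideanSpace ℝ (Fin n) → EReal)
    (hepi : ∀ x t, g (x, t) = ⊤ ↔ τ x ≤ (t : EReal))
    (hτcont : ∀ x, τ x < ⊤ → ContinuousAt τ x)
    (E : Set (EuclideanSpace ℝ (Fin n) × ℝ)) (hE : IsCompact E)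
    (hEt : ∀ p ∈ E, 0 ≤ p.2) (α σ : ℝ) (hα : 1 < α) (hσ : 0 < σ) :
    ∃ r > 0, ∀ p ∈ E, ∀ q ∈ E, dist p q ≤ r →
      g q ≤ ENNReal.ofReal α * g (p.1, α * p.2 + σ) := by
  have hc : 1 < ENNReal.ofReal α := by simpa using hα
  obtain ⟨r, hr, hR⟩ := hE.exists_dist_le_of_eventually_nhds_diag
    (R := fun p q => g q ≤ ENNReal.ofReal α * g (p.1, α * p.2 + σ)) fun p hp => by
      have hshift : p.2 < α * p.2 + σ := by nlinarith [hEt p hp]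
      exact eventually_le_mul_nhds_diag (φ := fun t => α * t + σ) hgpos hgcont hmono hepi
        hτcont (by fun_prop) hshift hc ENNReal.ofReal_ne_top
  exact ⟨r, hr, fun p hp q _ hpq => hR p hp q hpq⟩

theorem stmt3 {n : ℕ}
    (g : EuclideanSpace ℝ (Fin n) × ℝ → ℝ≥0∞)
    (hgpos : ∀ p, 0 < g p)
    (hgcont : ∀ p, g p < ⊤ → ContinuousAt g p)
    (hgliminf : ∀ p, g p = Filter.liminf g (𝓝[≠] p))
    (hmono : ∀ x : EuclideanSpace ℝ (Fin n), Monotone (fun t => g (x, t)))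
    (τ : EuclideanSpace ℝ (Fin n) → EReal)
    (hτbot : ∀ x, τ x ≠ ⊥)
    (hepi : ∀ x t, g (x, t) = ⊤ ↔ τ x ≤ (t : EReal))
    (hτcont : ∀ x, τ x < ⊤ → ContinuousAt τ x)
    (E : Set (EuclideanSpace ℝ (Fin n) × ℝ)) (hE : IsCompact E)
    (hEt : ∀ p ∈ E, 0 ≤ p.2) (α σ : ℝ) (hα : 1 < α) (hσ : 0 < σ) :
    ∃ r > 0, ∀ p ∈ E, ∀ q ∈ E, dist p q ≤ r →
      g q ≤ ENNReal.ofReal α * g (p.1, α * p.2 + σ) :=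
  stmt3_general g hgpos hgcont hmono τ hepi hτcont E hE hEt α σ hα hσ
end

section
/- Let p : [R, ∞) → ℝ be differentiable with 0 ≤ p(r) ≤ p_M for all r. Then for every r ≥ R there exists r₂ ∈ (r, r+1) with |p'(r₂)| ≤ p_M. Combining with the one-sided bound (r₂/r)^{n−1} p'(r₂) − p'(r) ≥ −(C₁/n)((r₂ⁿ − rⁿ)/r^{n−1}) from the radial Aronson–Bénilan estimate, one obtains the upper bound p'(r) ≤ ((r+1)/r)^{n−1} p_M + (C₁ r/n)( ((r+1)/r)ⁿ − 1 ) for all r ≥ R. -/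
open Set

theorem stmt13 (n : ℕ) (hn : 1 ≤ n) (R pM C₁ : ℝ) (hR : 0 < R) (hpM : 0 ≤ pM)
    (hC₁ : 0 ≤ C₁) (p : ℝ → ℝ)
    (hdiff : ∀ r ∈ Set.Ici R, DifferentiableAt ℝ p r)
    (hbound : ∀ r ∈ Set.Ici R, 0 ≤ p r ∧ p r ≤ pM) :
    (∀ r : ℝ, R ≤ r → ∃ r₂ ∈ Set.Ioo r (r + 1), |deriv p r₂| ≤ pM) ∧
    ((∀ r : ℝ, R ≤ r → ∀ r₂ ∈ Set.Ioo r (r + 1),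
        r₂ ^ (n - 1) * deriv p r₂ - r ^ (n - 1) * deriv p r
          ≥ -(C₁ / n) * (r₂ ^ n - r ^ n)) →
      ∀ r : ℝ, R ≤ r →
        deriv p r ≤ ((r + 1) / r) ^ (n - 1) * pM
          + (C₁ * r / n) * (((r + 1) / r) ^ n - 1)) := by
  have hmvt : ∀ r : ℝ, R ≤ r → ∃ r₂ ∈ Set.Ioo r (r + 1), |deriv p r₂| ≤ pM := by
    intro r hr
    have hlt : r < r + 1 := by linarith
    have hcont : ContinuousOn p (Icc r (r + 1)) := fun x hx =>
      (hdiff x (by exact le_trans hr hx.1)).continuousAt.continuousWithinAt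
    have hd : DifferentiableOn ℝ p (Ioo r (r + 1)) := fun x hx =>
      (hdiff x (le_trans hr hx.1.le)).differentiableWithinAt
    obtain ⟨c, hc, hceq⟩ := exists_deriv_eq_slope p hlt hcont hd
    refine ⟨c, hc, ?_⟩
    have h1 := hbound r (by exact hr)
    have h2 := hbound (r + 1) (by simp only [mem_Ici]; linarith)
    rw [hceq]
    have h3 : r + 1 - r = 1 := by ring
    rw [h3, div_one, abs_le]
    constructor <;> linarith [h1.1, h1.2, h2.1, h2.2]
  refine ⟨hmvt, ?_⟩
  intro hab r hr
  obtain ⟨r₂, hr₂, habs⟩ := hmvt r hr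
  have key := hab r hr r₂ hr₂
  have hrpos : 0 < r := lt_of_lt_of_le hR hr
  have hr₂pos : 0 < r₂ := lt_trans hrpos hr₂.1
  have hnpos : (0:ℝ) < n := by exact_mod_cast hn
  -- bound r₂^(n-1) * deriv p r₂ ≤ (r+1)^(n-1) * pM
  have hb1 : r₂ ^ (n - 1) * deriv p r₂ ≤ (r + 1) ^ (n - 1) * pM := by
    have h1 : deriv p r₂ ≤ pM := (abs_le.mp habs).2
    have h2 : r₂ ^ (n - 1) ≤ (r + 1) ^ (n - 1) :=
      pow_le_pow_left₀ hr₂pos.le hr₂.2.le _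
    calc r₂ ^ (n - 1) * deriv p r₂ ≤ r₂ ^ (n - 1) * pM := by
          apply mul_le_mul_of_nonneg_left h1 (by positivity)
      _ ≤ (r + 1) ^ (n - 1) * pM := mul_le_mul_of_nonneg_right h2 hpM
  have hb2 : r₂ ^ n ≤ (r + 1) ^ n := pow_le_pow_left₀ hr₂pos.le hr₂.2.le _
  have hmain : r ^ (n - 1) * deriv p r ≤ (r + 1) ^ (n - 1) * pM + (C₁ / n) * ((r + 1) ^ n - r ^ n) := by
    have hC : 0 ≤ C₁ / n := by positivity
    nlinarith [mul_le_mul_of_nonneg_left hb2 hC]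
  have hrn : (0:ℝ) < r ^ (n - 1) := by positivity
  rw [div_pow, div_pow]
  rw [← sub_nonneg]
  have hrpow : r ^ n = r ^ (n - 1) * r := by
    rw [← pow_succ]; congr 1; omega
  have hgoal : ((r + 1) ^ (n-1) / r ^ (n-1)) * pM + (C₁ * r / n) * ((r + 1) ^ n / r ^ n - 1)
      - deriv p r
      = ((r + 1) ^ (n - 1) * pM + (C₁ / n) * ((r + 1) ^ n - r ^ n) - r ^ (n - 1) * deriv p r) / r ^ (n-1) := by
    rw [hrpow]
    field_simp
  rw [hgoal]
  exact div_nonneg (by linarith) hrn.le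
end

section
/- Let d ≥ 1, r > 0, and let Ω ⊆ ℝ^d and Ω' ⊆ ℝ^d be measurable sets with Ω ⊆ Ω' satisfying: (i) every point z ∈ ∂Ω' lies on the boundary of a ball of radius r contained in Ω' (interior ball property at scale r); (ii) { x : dist(x, Ω) ≤ cr } ⊆ Ω' for some constant c ∈ (0,1]; (iii) |Ω' \ Ω| ≤ C r for constants C > 0 (Lebesgue measure). Then any collection of pairwise disjoint open balls of radius r centered at points of ∂Ω' has cardinality N ≤ C' r^{1−d}, where C' depends only on C, c and d. -/
open Set MeasureTheory
open scoped ENNReal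

theorem stmt16 (d : ℕ) (hd : 1 ≤ d) (C c : ℝ) (hC : 0 < C) (hc0 : 0 < c) (hc1 : c ≤ 1) :
    ∃ C' : ℝ, 0 < C' ∧ ∀ r : ℝ, 0 < r →
      ∀ Ω Ω' : Set (EuclideanSpace ℝ (Fin d)),
        MeasurableSet Ω → MeasurableSet Ω' → Ω ⊆ Ω' →
        (∀ z ∈ frontier Ω', ∃ y, dist z y = r ∧ Metric.ball y r ⊆ Ω') →
        {x | Metric.infDist x Ω ≤ c * r} ⊆ Ω' →
        volume (Ω' \ Ω) ≤ ENNReal.ofReal (C * r) →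
        ∀ S : Finset (EuclideanSpace ℝ (Fin d)),
          (∀ z ∈ S, z ∈ frontier Ω') →
          ((S : Set (EuclideanSpace ℝ (Fin d))).PairwiseDisjoint
            fun z => Metric.ball z r) →
          (S.card : ℝ) ≤ C' * r ^ ((1 : ℤ) - d) := by
  classical
  set E := EuclideanSpace ℝ (Fin d) with hE
  have hωpos : (0:ℝ≥0∞) < volume (Metric.ball (0:E) 1) := Metric.measure_ball_pos _ _ one_pos
  have hωfin : volume (Metric.ball (0:E) 1) < ⊤ := measure_ball_lt_top
  set ω : ℝ := (volume (Metric.ball (0:E) 1)).toReal with hωdef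
  have hω : 0 < ω := ENNReal.toReal_pos hωpos.ne' hωfin.ne
  set κ : ℝ := (c/8)^d * ω with hκdef
  have hκ : 0 < κ := mul_pos (pow_pos (by linarith) d) hω
  refine ⟨C / κ, div_pos hC hκ, ?_⟩
  intro r hr Ω Ω' hΩm hΩ'm hsub hB hnb hvol S hS hdisj
  -- choice of interior ball centers
  have hB' : ∀ z : E, ∃ y : E, z ∈ frontier Ω' →
      dist z y = r ∧ Metric.ball y r ⊆ Ω' := by
    intro z
    by_cases h : z ∈ frontier Ω'
    · obtain ⟨y, h1, h2⟩ := hB z h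
      exact ⟨y, fun _ => ⟨h1, h2⟩⟩
    · exact ⟨z, fun h' => absurd h' h⟩
  choose Y hY using hB'
  set p : E → E := fun z => z + (c/4) • (Y z - z) with hpdef
  set ρ : ℝ := c * r / 8 with hρdef
  have hρ : 0 < ρ := by positivity
  -- lower bound on infDist at boundary points
  have hinf : ∀ z ∈ frontier Ω', c * r ≤ Metric.infDist z Ω := by
    intro z hz
    by_contra h
    push_neg at h
    have hzc : z ∈ closure Ω'ᶜ := by
      rw [frontier_eq_closure_inter_closure] at hz
      exact hz.2
    rw [Metric.mem_closure_iff] at hzc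
    obtain ⟨b, hb, hbd⟩ := hzc (c * r - Metric.infDist z Ω) (by linarith)
    have : Metric.infDist b Ω ≤ Metric.infDist z Ω + dist b z :=
      Metric.infDist_le_infDist_add_dist
    rw [dist_comm] at hbd
    have : Metric.infDist b Ω ≤ c * r := by linarith
    exact hb (hnb this)
  -- key geometric facts
  have key : ∀ z ∈ S, Metric.ball (p z) ρ ⊆ (Ω' \ Ω) ∩ Metric.ball z r := by
    intro z hzS
    have hzf := hS z hzS
    obtain ⟨hYd, hYb⟩ := hY z hzf
    have hpz : dist (p z) z = c / 4 * r := by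
      rw [dist_eq_norm]
      have : p z - z = (c/4) • (Y z - z) := by simp [hpdef]
      rw [this, norm_smul, Real.norm_eq_abs, abs_of_pos (by linarith)]
      have : ‖Y z - z‖ = r := by
        rw [← dist_eq_norm, dist_comm]; exact hYd
      rw [this]
    have hpY : dist (p z) (Y z) = (1 - c/4) * r := by
      rw [dist_eq_norm]
      have : p z - Y z = (1 - c/4) • (z - Y z) := by
        simp only [hpdef]
        module
      rw [this, norm_smul, Real.norm_eq_abs, abs_of_pos (by linarith)]
      have : ‖z - Y z‖ = r := by rw [← dist_eq_norm]; exact hYd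
      rw [this]
    intro x hx
    have hxp : dist x (p z) < ρ := Metric.mem_ball.mp hx
    have hxz : dist x z < 3 * c * r / 8 := by
      calc dist x z ≤ dist x (p z) + dist (p z) z := dist_triangle _ _ _
        _ < ρ + c/4 * r := by rw [hpz]; linarith
        _ = 3 * c * r / 8 := by rw [hρdef]; ring
    constructor
    · constructor
      · apply hYb
        rw [Metric.mem_ball]
        calc dist x (Y z) ≤ dist x (p z) + dist (p z) (Y z) := dist_triangle _ _ _
          _ < ρ + (1 - c/4) * r := by rw [hpY]; linarith
          _ = r - c * r / 8 := by rw [hρdef]; ring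
          _ < r := by nlinarith
      · intro hxΩ
        have h0 : Metric.infDist x Ω = 0 := Metric.infDist_zero_of_mem hxΩ
        have : Metric.infDist z Ω ≤ Metric.infDist x Ω + dist z x :=
          Metric.infDist_le_infDist_add_dist
        rw [dist_comm] at this
        have := hinf z hzf
        nlinarith
    · rw [Metric.mem_ball]
      nlinarith
  -- disjointness of the small balls
  have hdisj' : (S : Set E).PairwiseDisjoint fun z => Metric.ball (p z) ρ := by
    intro a ha b hb hab
    exact Disjoint.mono (fun x hx => ((key a ha) hx).2) (fun x hx => ((key b hb) hx).2)
      (hdisj ha hb hab)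
  -- measure count
  have hmeas : ∑ z ∈ S, volume (Metric.ball (p z) ρ) ≤ ENNReal.ofReal (C * r) := by
    rw [← measure_biUnion_finset hdisj' (fun z _ => measurableSet_ball)]
    refine le_trans (measure_mono ?_) hvol
    intro x hx
    simp only [Set.mem_iUnion] at hx
    obtain ⟨z, hz, hxz⟩ := hx
    exact ((key z hz) hxz).1
  haveI : Nontrivial E := by
    have hfr : 0 < Module.finrank ℝ E := by
      rw [show Module.finrank ℝ E = d from finrank_euclideanSpace_fin]; omega
    exact Module.nontrivial_of_finrank_pos hfr
  have hballvol : ∀ z : E, volume (Metric.ball (p z) ρ) = ENNReal.ofReal (κ * r ^ d) := by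
    intro z
    rw [Measure.addHaar_ball volume (p z) hρ.le]
    have hfr : Module.finrank ℝ E = d := finrank_euclideanSpace_fin
    rw [hfr]
    rw [← ENNReal.ofReal_toReal hωfin.ne, ← hωdef,
      ← ENNReal.ofReal_mul (by positivity)]
    congr 1
    rw [hρdef, hκdef]
    rw [show c * r / 8 = (c/8) * r by ring, mul_pow]
    ring
  have hsum : (S.card : ℝ≥0∞) * ENNReal.ofReal (κ * r ^ d) ≤ ENNReal.ofReal (C * r) := by
    calc (S.card : ℝ≥0∞) * ENNReal.ofReal (κ * r ^ d)
        = ∑ z ∈ S, ENNReal.ofReal (κ * r ^ d) := by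
          rw [Finset.sum_const, nsmul_eq_mul]
      _ = ∑ z ∈ S, volume (Metric.ball (p z) ρ) := by
          exact Finset.sum_congr rfl fun z _ => (hballvol z).symm
      _ ≤ ENNReal.ofReal (C * r) := hmeas
  -- convert to real
  have hreal : (S.card : ℝ) * (κ * r ^ d) ≤ C * r := by
    have h1 : ENNReal.ofReal ((S.card : ℝ) * (κ * r ^ d)) ≤ ENNReal.ofReal (C * r) := by
      rw [ENNReal.ofReal_mul (by positivity)]
      rwa [ENNReal.ofReal_natCast]
    exact (ENNReal.ofReal_le_ofReal_iff (by positivity)).mp h1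
  have hzpow : r ^ ((1 : ℤ) - d) = r * (r ^ d)⁻¹ := by
    rw [zpow_sub₀ hr.ne', zpow_one, zpow_natCast]
    ring
  have hrd : (0:ℝ) < r ^ d := pow_pos hr d
  have h2 : (S.card : ℝ) ≤ C * r / (κ * r ^ d) := by
    rw [le_div_iff₀ (by positivity)]
    linarith [hreal]
  calc (S.card : ℝ) ≤ C * r / (κ * r ^ d) := h2
    _ = C / κ * r ^ ((1 : ℤ) - d) := by
        rw [hzpow]
        field_simp
end
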